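/- arXiv:math/0508257 — 2 statements merged into one kernel-verified Lean document; each statement's English description precedes it below -/
import Mathlib

section
/- Let V be a finite-dimensional complex vector space (with its canonical topology) and let \Lambda \subset V^* be a finite set of linear functionals. Then the set \hat{h}^{reg} = { (\theta, n) \in V \times \mathbb{C} : n \ne 0 and \theta(\alpha) + n d \ne 0 for every \alpha \in \Lambda and every integer d } is an open subset of V \times \mathbb{C}. -/
open Set

theorem forall_add_mul_intCast_ne_zero_iff {K : Type*} [Field K] {a n : K} (hn : n ≠ 0) :
    (∀ d : ℤ, a + n * d ≠ 0) ↔ -a / n ∉ range ((↑) : ℤ → K) := by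
  rw [mem_range, not_exists]
  refine forall_congr' fun d => not_congr ?_
  rw [eq_div_iff hn]
  constructor <;> intro h <;> linear_combination h

/-- On `{g ≠ 0}` this is the preimage of the closed set `ℤ ⊂ ℂ` under the continuous map
`-f / g`, so the infinitely many removed level sets do not accumulate. -/
theorem isOpen_setOf_ne_zero_and_forall_add_mul_intCast_ne_zero {X : Type*} [TopologicalSpace X]
    {f g : X → ℂ} (hf : Continuous f) (hg : Continuous g) :
    IsOpen {x | g x ≠ 0 ∧ ∀ d : ℤ, f x + g x * d ≠ 0} := by
  have hU : IsOpen {x | g x ≠ 0} := isOpen_ne.preimage hg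
  have hset : {x | g x ≠ 0 ∧ ∀ d : ℤ, f x + g x * d ≠ 0}
      = {x | g x ≠ 0} ∩ (fun x => -f x / g x) ⁻¹' (range ((↑) : ℤ → ℂ))ᶜ := by
    ext x
    simp only [mem_ofPred_eq, mem_inter_iff, mem_preimage, mem_compl_iff]
    exact and_congr_right forall_add_mul_intCast_ne_zero_iff
  rw [hset]
  exact (hf.neg.continuousOn.div hg.continuousOn fun _ hx => hx).isOpen_inter_preimage hU
    Complex.isClosed_range_intCast.isOpen_compl

/-- Let `V` be a finite-dimensional complex vector space and `Λ ⊂ V*` a finite set of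
linear functionals.  Then the complement of the affine root hyperplanes,
`ĥ^reg = {(θ, n) ∈ V × ℂ : n ≠ 0 ∧ θ(α) + n·d ≠ 0 for all α ∈ Λ, d ∈ ℤ}`,
is an open subset of `V × ℂ`. -/
theorem regular_set_isOpen {V : Type*} [NormedAddCommGroup V] [NormedSpace ℂ V]
    [FiniteDimensional ℂ V] (Λ : Finset (V →ₗ[ℂ] ℂ)) :
    IsOpen {p : V × ℂ | p.2 ≠ 0 ∧ ∀ α ∈ Λ, ∀ d : ℤ, α p.1 + p.2 * (d : ℂ) ≠ 0} := by
  have hset : {p : V × ℂ | p.2 ≠ 0 ∧ ∀ α ∈ Λ, ∀ d : ℤ, α p.1 + p.2 * (d : ℂ) ≠ 0}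
      = {p | p.2 ≠ 0} ∩ ⋂ α ∈ Λ, {p | p.2 ≠ 0 ∧ ∀ d : ℤ, α p.1 + p.2 * (d : ℂ) ≠ 0} := by
    ext p
    simp only [mem_ofPred_eq, mem_inter_iff, mem_iInter]
    exact and_congr_right fun hn => forall₂_congr fun _ _ => (and_iff_right hn).symm
  rw [hset]
  exact (isOpen_ne.preimage continuous_snd).inter <| isOpen_biInter_finset fun α _ =>
    isOpen_setOf_ne_zero_and_forall_add_mul_intCast_ne_zero
      (α.continuous_of_finiteDimensional.comp continuous_fst) continuous_snd
end

section
/- Let \Phi be a finite reduced crystallographic root system in a real inner product space E, with coroots \alpha^\vee = 2\alpha/\langle\alpha,\alpha\rangle. For \alpha \in \Phi and k \in \mathbb{Z} let s_{\alpha,k} : E \to E be the affine reflection s_{\alpha,k}(x) = x - (\langle x, \alpha^\vee\rangle - k)\,\alpha, and let \hat{W} be the group of affine transformations of E generated by all s_{\alpha,k}. Let E^{reg} = { x \in E : \langle x, \alpha^\vee \rangle \notin \mathbb{Z} for all \alpha \in \Phi }. Then \hat{W} preserves E^{reg} and acts freely on it: if w \in \hat{W} fixes some point of E^{reg}, then w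 is the identity. -/
/-!
Fix a regular point `x`. Every affine root `a` has `affineForm a x ≠ 0`, so it is either positive
or negative at `x`, and the positive values are bounded below by some `ε > 0` (there are finitely
many roots, and `x` is at positive distance from the integers in each coordinate `⟪x, α^∨⟫`).
Call a positive affine root simple if it is not the sum of two positive ones and stays positive for
no larger constant. A rank-two computation (using that the root system is reduced and
crystallographic) shows that the reflection in a simple root `b` permutes the positive affine roots
other than `b`. Induction on the value at `x`, in steps of at least `ε`, then shows that the
reflections in simple roots generate `Ŵ`.

If `w = s₁ ⋯ sₙ` is a product of simple reflections and `b` is negative at `w⁻¹ x`, following `b`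
through the word finds an `sᵢ` that `sᵢ₊₁ ⋯ sₙ` conjugates to `s_b`, so `w s_b` is a product of
`n - 1` of the `sᵢ`. If `w = w' s_b` fixes `x`, then `w'⁻¹ x = s_b x` is on the negative side of
`b`, so `w` is a product of `n - 1` simple reflections. Hence `w = 1` by induction on `n`.
Preservation of the regular set is easier: `s_a` permutes the affine roots.
-/

open scoped RealInnerProductSpace

namespace AffineWeyl

theorem gap_induction {ι : Type*} {s : Set ι} {f : ι → ℝ} {ε : ℝ} (hε : 0 < ε)
    (hf : ∀ i ∈ s, 0 ≤ f i) {P : ι → Prop}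
    (h : ∀ i ∈ s, (∀ j ∈ s, f j + ε ≤ f i → P j) → P i) : ∀ i ∈ s, P i := by
  suffices ∀ n : ℕ, ∀ i ∈ s, f i ≤ n * ε → P i from
    fun i hi => this _ i hi ((div_le_iff₀ hε).1 (Nat.le_ceil _))
  intro n
  induction n with
  | zero =>
    refine fun i hi hle => h i hi fun j hj hji => ?_
    rw [Nat.cast_zero, zero_mul] at hle
    linarith [hf j hj]
  | succ n ih =>
    refine fun i hi hle => h i hi fun j hj hji => ih j hj ?_
    push_cast at hle
    linarith

variable {E : Type*} [NormedAddCommGroup E] [InnerProductSpace ℝ E]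

/-! ### Coroots and reflections -/

/-- For `α = 0` this is `0` (as `2 / 0 = 0`), so `reflection 0` and `affineReflection (0, k)` are
the identity. -/
noncomputable def coroot (α : E) : E := (2 / ⟪α, α⟫) • α

@[simp]
lemma coroot_zero : coroot (0 : E) = 0 := by simp [coroot]

lemma coroot_neg (α : E) : coroot (-α) = -coroot α := by
  simp [coroot]

lemma inner_coroot_self {α : E} (h : α ≠ 0) : ⟪α, coroot α⟫ = 2 := by
  have : ⟪α, α⟫ ≠ 0 := inner_self_ne_zero.2 h
  rw [coroot, real_inner_smul_right]
  field_simp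

lemma inner_coroot_pos_iff (α β : E) : 0 < ⟪α, coroot β⟫ ↔ 0 < ⟪α, β⟫ := by
  rcases eq_or_ne β 0 with rfl | hβ
  · simp
  · have : 0 < 2 / ⟪β, β⟫ := div_pos two_pos (real_inner_self_pos.2 hβ)
    rw [coroot, real_inner_smul_right, mul_pos_iff_of_pos_left this]

lemma inner_coroot_mul_inner_coroot (α β : E) :
    ⟪β, coroot α⟫ * ⟪α, coroot β⟫ = 4 * ⟪α, β⟫ ^ 2 / (⟪α, α⟫ * ⟪β, β⟫) := by
  simp only [coroot, real_inner_smul_right, real_inner_comm α β]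
  ring

lemma inner_coroot_mul_inner_coroot_lt_four {α β : E} (hα : α ≠ 0) (hβ : β ≠ 0)
    (h : ∀ r : ℝ, β ≠ r • α) : ⟪β, coroot α⟫ * ⟪α, coroot β⟫ < 4 := by
  have hαα := real_inner_self_pos.2 hα
  have hββ := real_inner_self_pos.2 hβ
  have hcs : ⟪α, β⟫ ^ 2 < ⟪α, α⟫ * ⟪β, β⟫ := by
    set r := ⟪α, β⟫ / ⟪α, α⟫
    have hpos : 0 < ⟪β - r • α, β - r • α⟫ := real_inner_self_pos.2 (sub_ne_zero.2 (h r))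
    have : ⟪β - r • α, β - r • α⟫ = ⟪β, β⟫ - ⟪α, β⟫ ^ 2 / ⟪α, α⟫ := by
      simp only [inner_sub_left, inner_sub_right, real_inner_smul_left, real_inner_smul_right,
        real_inner_comm β α, r]
      field_simp
      ring
    rw [this, sub_pos, div_lt_iff₀ hαα] at hpos
    linarith
  rw [inner_coroot_mul_inner_coroot, div_lt_iff₀ (mul_pos hαα hββ)]
  linarith

noncomputable def reflection (α : E) : E ≃ₗ[ℝ] E :=
  LinearEquiv.ofInvolutive (Module.preReflection α (innerSL ℝ (coroot α)).toLinearMap) <| by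
    rcases eq_or_ne α 0 with rfl | hα
    · intro v
      simp [Module.preReflection_apply]
    · exact Module.involutive_preReflection (by simpa [real_inner_comm] using inner_coroot_self hα)

lemma reflection_apply (α v : E) : reflection α v = v - ⟪v, coroot α⟫ • α := by
  simp [reflection, Module.preReflection_apply, real_inner_comm]

lemma inner_reflection_self (β α : E) :
    ⟪reflection β α, reflection β α⟫ = ⟪α, α⟫ := by
  rcases eq_or_ne β 0 with rfl | hβ
  · simp [reflection_apply]
  · have : ⟪β, β⟫ ≠ 0 := inner_self_ne_zero.2 hβ
    simp only [reflection_apply, coroot, inner_sub_left, inner_sub_right, real_inner_smul_left,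
      real_inner_smul_right, real_inner_comm β α]
    field_simp
    ring

lemma coroot_reflection (β α : E) :
    coroot (reflection β α) = coroot α - ⟪β, coroot α⟫ • coroot β := by
  rw [coroot, inner_reflection_self, reflection_apply, smul_sub, ← coroot, smul_smul]
  simp only [coroot, real_inner_smul_right, smul_smul, real_inner_comm α β]
  congr 2
  ring

/-! ### Affine roots -/

noncomputable def affineForm (a : E × ℝ) (y : E) : ℝ := ⟪y, coroot a.1⟫ - a.2

lemma affineForm_neg (a : E × ℝ) (y : E) : affineForm (-a) y = -affineForm a y := by
  simp only [affineForm, Prod.fst_neg, Prod.snd_neg, coroot_neg, inner_neg_right]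
  ring

lemma coroot_add_of_affineForm_eq_add {a b c : E × ℝ}
    (h : affineForm a = affineForm b + affineForm c) :
    coroot a.1 = coroot b.1 + coroot c.1 := by
  have h0 := congrFun h 0
  refine ext_inner_left ℝ fun y => ?_
  have hy := congrFun h y
  simp only [affineForm, Pi.add_apply, inner_zero_left] at h0 hy
  rw [inner_add_right]
  linarith

noncomputable def affineReflection (a : E × ℝ) : E ≃ᵃ[ℝ] E :=
  (reflection a.1).toAffineEquiv.trans (AffineEquiv.constVAdd ℝ E (a.2 • a.1))

lemma affineReflection_apply (a : E × ℝ) (y : E) :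
    affineReflection a y = y - affineForm a y • a.1 := by
  simp only [affineReflection, AffineEquiv.coe_trans, Function.comp_apply,
    LinearEquiv.coe_toAffineEquiv, reflection_apply, AffineEquiv.constVAdd_apply, vadd_eq_add,
    affineForm, sub_smul]
  abel

lemma affineReflection_add (a : E × ℝ) (y v : E) :
    affineReflection a (y + v) = affineReflection a y + reflection a.1 v := by
  simp only [affineReflection, AffineEquiv.coe_trans, Function.comp_apply,
    LinearEquiv.coe_toAffineEquiv, map_add, AffineEquiv.constVAdd_apply, vadd_eq_add]
  abel

lemma affineForm_affineReflection_self {a : E × ℝ} (h : a.1 ≠ 0) (y : E) :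
    affineForm a (affineReflection a y) = -affineForm a y := by
  simp only [affineReflection_apply, affineForm, inner_sub_left, real_inner_smul_left,
    inner_coroot_self h]
  ring

@[simp]
lemma affineReflection_mul_self (a : E × ℝ) : affineReflection a * affineReflection a = 1 := by
  ext y
  rcases eq_or_ne a.1 0 with h | h
  · simp [affineReflection_apply, h]
  · rw [AffineEquiv.coe_mul, Function.comp_apply, affineReflection_apply a (affineReflection a y),
      affineForm_affineReflection_self h, affineReflection_apply]
    simp

@[simp]
lemma affineReflection_inv (a : E × ℝ) : (affineReflection a)⁻¹ = affineReflection a :=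
  inv_eq_of_mul_eq_one_right (affineReflection_mul_self a)

lemma affineReflection_neg (a : E × ℝ) : affineReflection (-a) = affineReflection a := by
  ext y
  simp only [affineReflection_apply, affineForm_neg, Prod.fst_neg, smul_neg, neg_smul, neg_neg]

noncomputable def reflectAffineRoot (b a : E × ℝ) : E × ℝ :=
  (reflection b.1 a.1, a.2 - b.2 * ⟪b.1, coroot a.1⟫)

lemma affineForm_reflectAffineRoot (b a : E × ℝ) (y : E) :
    affineForm (reflectAffineRoot b a) y = affineForm a y - ⟪b.1, coroot a.1⟫ * affineForm b y := by
  simp only [affineForm, reflectAffineRoot, coroot_reflection, inner_sub_right,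
    real_inner_smul_right]
  ring

lemma affineForm_affineReflection (a b : E × ℝ) (y : E) :
    affineForm a (affineReflection b y) = affineForm (reflectAffineRoot b a) y := by
  rw [affineForm_reflectAffineRoot, affineReflection_apply]
  simp only [affineForm, inner_sub_left, real_inner_smul_left]
  ring

lemma affineReflection_reflectAffineRoot (b a : E × ℝ) :
    affineReflection (reflectAffineRoot b a) =
      affineReflection b * affineReflection a * affineReflection b := by
  ext y
  have hy : affineReflection b (affineReflection b y) = y :=
    congrArg (fun g : E ≃ᵃ[ℝ] E => g y) (affineReflection_mul_self b)
  simp only [AffineEquiv.coe_mul, Function.comp_apply]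
  rw [affineReflection_apply a, affineForm_affineReflection, sub_eq_add_neg, affineReflection_add,
    hy, affineReflection_apply, reflectAffineRoot, map_neg, map_smul, sub_eq_add_neg]

/-! ### Root systems and the regular set -/

structure IsRootSystem (Φ : Finset E) : Prop where
  ne_zero : ∀ α ∈ Φ, α ≠ 0
  reflection_mem : ∀ α ∈ Φ, ∀ β ∈ Φ, reflection α β ∈ Φ
  exists_int_inner_coroot : ∀ α ∈ Φ, ∀ β ∈ Φ, ∃ n : ℤ, ⟪β, coroot α⟫ = n
  reduced : ∀ α ∈ Φ, ∀ c : ℝ, c • α ∈ Φ → c = 1 ∨ c = -1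

/-- The pair `(α, k)` stands for the affine root `y ↦ ⟪y, α^∨⟫ - k` (see `affineForm`). The constant
is kept real, so that reflecting one affine root in another needs no integer-valued pairing. -/
def affineRoots (Φ : Finset E) : Set (E × ℝ) := {a | a.1 ∈ Φ ∧ ∃ k : ℤ, a.2 = k}

def reflections (Φ : Finset E) : Set (E ≃ᵃ[ℝ] E) := affineReflection '' affineRoots Φ

def regularSet (Φ : Finset E) : Set E := {y | ∀ α ∈ Φ, ∀ k : ℤ, ⟪y, coroot α⟫ ≠ k}

variable {Φ : Finset E}

lemma IsRootSystem.neg_mem (hΦ : IsRootSystem Φ) {α : E} (hα : α ∈ Φ) : -α ∈ Φ := by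
  simpa [reflection_apply, inner_coroot_self (hΦ.ne_zero α hα), two_smul] using
    hΦ.reflection_mem α hα α hα

lemma IsRootSystem.inner_coroot_eq_one_of_two_le (hΦ : IsRootSystem Φ) {α β : E} (hα : α ∈ Φ)
    (hβ : β ∈ Φ) (hβα : β ≠ α) (hβα' : β ≠ -α) (h : 2 ≤ ⟪β, coroot α⟫) :
    ⟪α, coroot β⟫ = 1 ∧ ⟪β, coroot α⟫ ≤ 3 := by
  have hprop : ∀ r : ℝ, β ≠ r • α := by
    rintro r rfl
    rcases hΦ.reduced α hα r hβ with rfl | rfl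
    exacts [hβα (one_smul ℝ α), hβα' (neg_one_smul ℝ α)]
  have hlt := inner_coroot_mul_inner_coroot_lt_four (hΦ.ne_zero α hα) (hΦ.ne_zero β hβ) hprop
  have hpos : 0 < ⟪α, coroot β⟫ := by
    rw [inner_coroot_pos_iff, real_inner_comm, ← inner_coroot_pos_iff]
    linarith
  obtain ⟨n, hn⟩ := hΦ.exists_int_inner_coroot α hα β hβ
  obtain ⟨m, hm⟩ := hΦ.exists_int_inner_coroot β hβ α hα
  rw [hn] at h hlt ⊢
  rw [hm] at hlt hpos ⊢
  norm_cast at h hlt hpos ⊢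
  have : m = 1 := by nlinarith
  subst this
  omega

lemma neg_mem_affineRoots (hΦ : IsRootSystem Φ) {a : E × ℝ} (ha : a ∈ affineRoots Φ) :
    -a ∈ affineRoots Φ := by
  obtain ⟨hα, k, hk⟩ := ha
  exact ⟨hΦ.neg_mem hα, -k, by simp [hk]⟩

lemma reflectAffineRoot_mem_affineRoots (hΦ : IsRootSystem Φ) {a b : E × ℝ}
    (ha : a ∈ affineRoots Φ) (hb : b ∈ affineRoots Φ) : reflectAffineRoot b a ∈ affineRoots Φ := by
  obtain ⟨hα, k, hk⟩ := ha
  obtain ⟨hβ, l, hl⟩ := hb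
  obtain ⟨n, hn⟩ := hΦ.exists_int_inner_coroot a.1 hα b.1 hβ
  exact ⟨hΦ.reflection_mem b.1 hβ a.1 hα, k - l * n, by simp [reflectAffineRoot, hk, hl, hn]⟩

lemma affineForm_ne_zero {x : E} (hx : x ∈ regularSet Φ) {a : E × ℝ} (ha : a ∈ affineRoots Φ) :
    affineForm a x ≠ 0 := by
  obtain ⟨hα, k, hk⟩ := ha
  rw [affineForm, hk, sub_ne_zero]
  exact hx a.1 hα k

lemma mapsTo_affineReflection_regularSet (hΦ : IsRootSystem Φ) {a : E × ℝ}
    (ha : a ∈ affineRoots Φ) : Set.MapsTo (affineReflection a) (regularSet Φ) (regularSet Φ) :=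
  fun y hy β hβ k => by
    have := affineForm_ne_zero hy
      (reflectAffineRoot_mem_affineRoots hΦ (a := (β, k)) ⟨hβ, k, rfl⟩ ha)
    rwa [← affineForm_affineReflection, affineForm, sub_ne_zero] at this

lemma mapsTo_regularSet_of_mem_closure (hΦ : IsRootSystem Φ) {w : E ≃ᵃ[ℝ] E}
    (hw : w ∈ Subgroup.closure (reflections Φ)) : Set.MapsTo w (regularSet Φ) (regularSet Φ) := by
  induction hw using Subgroup.closure_induction'' with
  | mem _ hs | inv_mem _ hs =>
    obtain ⟨a, ha, rfl⟩ := hs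
    simpa using mapsTo_affineReflection_regularSet hΦ ha
  | one => exact Set.mapsTo_id _
  | mul _ _ _ _ hu hv => exact hu.comp hv

/-! ### Positive and simple affine roots at a regular point -/

def positiveAffineRoots (Φ : Finset E) (x : E) : Set (E × ℝ) :=
  {a ∈ affineRoots Φ | 0 < affineForm a x}

/-- The condition `affineForm b x < 1` says that `(b.1, b.2 + 1)` is not positive. -/
def simpleAffineRoots (Φ : Finset E) (x : E) : Set (E × ℝ) :=
  {b ∈ positiveAffineRoots Φ x | affineForm b x < 1 ∧ ∀ a ∈ positiveAffineRoots Φ x,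
    ∀ c ∈ positiveAffineRoots Φ x, affineForm b ≠ affineForm a + affineForm c}

def simpleReflections (Φ : Finset E) (x : E) : Set (E ≃ᵃ[ℝ] E) :=
  affineReflection '' simpleAffineRoots Φ x

variable {x : E}

lemma neg_mem_positiveAffineRoots (hΦ : IsRootSystem Φ) {a : E × ℝ} (ha : a ∈ affineRoots Φ)
    (h : affineForm a x < 0) : -a ∈ positiveAffineRoots Φ x :=
  ⟨neg_mem_affineRoots hΦ ha, by rw [affineForm_neg]; linarith⟩

lemma exists_gap (hx : x ∈ regularSet Φ) :
    ∃ ε > 0, ε ≤ 1 ∧ ∀ a ∈ positiveAffineRoots Φ x, ε ≤ affineForm a x := by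
  classical
  set S := insert 1 (Φ.image fun α => Int.fract ⟪x, coroot α⟫)
  have hS : S.Nonempty := Finset.insert_nonempty _ _
  refine ⟨S.min' hS, ?_, S.min'_le 1 (Finset.mem_insert_self _ _), ?_⟩
  · obtain h | h := Finset.mem_insert.1 (S.min'_mem hS)
    · exact h ▸ one_pos
    · obtain ⟨α, hα, h⟩ := Finset.mem_image.1 h
      exact h ▸ Int.fract_pos.2 (hx α hα _)
  · rintro ⟨α, c⟩ ⟨⟨hα, k, rfl⟩, hpos⟩
    have hk : k ≤ ⌊⟪x, coroot α⟫⌋ := Int.le_floor.2 (by simp only [affineForm] at hpos; linarith)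
    calc S.min' hS ≤ Int.fract ⟪x, coroot α⟫ :=
          S.min'_le _ (Finset.mem_insert_of_mem (Finset.mem_image_of_mem _ hα))
      _ ≤ affineForm (α, (k : ℝ)) x := by
          rw [affineForm, ← Int.self_sub_floor]
          exact sub_le_sub_left (Int.cast_le.2 hk) _

lemma affineForm_lt_zero_of_eq_add (hx : x ∈ regularSet Φ) {a b c : E × ℝ}
    (hb : b ∈ simpleAffineRoots Φ x) (ha : a ∈ positiveAffineRoots Φ x) (hc : c ∈ affineRoots Φ)
    (h : affineForm b = affineForm a + affineForm c) : affineForm c x < 0 :=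
  (affineForm_ne_zero hx hc).lt_of_le <| not_lt.1 fun hpos => hb.2.2 a ha c ⟨hc, hpos⟩ h

lemma exists_simple_inner_coroot_pos (hx : x ∈ regularSet Φ) {u : E} {a : E × ℝ}
    (ha : a ∈ positiveAffineRoots Φ x) (hu : 0 < ⟪u, coroot a.1⟫) :
    ∃ b ∈ simpleAffineRoots Φ x, 0 < ⟪u, coroot b.1⟫ := by
  obtain ⟨ε, hε, hε1, hgap⟩ := exists_gap hx
  refine gap_induction (f := (affineForm · x))
    (P := fun a => 0 < ⟪u, coroot a.1⟫ → ∃ b ∈ simpleAffineRoots Φ x, 0 < ⟪u, coroot b.1⟫)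
    hε (fun a ha => ha.2.le) (fun a ha ih hu => ?_) a ha hu
  by_cases hs : a ∈ simpleAffineRoots Φ x
  · exact ⟨a, hs, hu⟩
  obtain hge | ⟨p, hp, c, hc, hpc⟩ : 1 ≤ affineForm a x ∨ ∃ p ∈ positiveAffineRoots Φ x,
      ∃ c ∈ positiveAffineRoots Φ x, affineForm a = affineForm p + affineForm c := by
    by_contra! h
    exact hs ⟨ha, h.1, fun p hp c hc => h.2 p hp c hc⟩
  · obtain ⟨⟨hα, k, hk⟩, -⟩ := ha
    have hshift : affineForm (a.1, a.2 + 1) x = affineForm a x - 1 := by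
      simp only [affineForm]
      ring
    have hmem : (a.1, a.2 + 1) ∈ affineRoots Φ := ⟨hα, k + 1, by simp [hk]⟩
    have hpos : 0 < affineForm (a.1, a.2 + 1) x :=
      (affineForm_ne_zero hx hmem).symm.lt_of_le (by linarith)
    exact ih _ ⟨hmem, hpos⟩ (by linarith) hu
  · have hval := congrFun hpc x
    simp only [Pi.add_apply] at hval
    rw [coroot_add_of_affineForm_eq_add hpc, inner_add_right] at hu
    rcases lt_or_ge 0 ⟪u, coroot p.1⟫ with hup | hup
    · exact ih p hp (by linarith [hgap c hc]) hup
    · exact ih c hc (by linarith [hgap p hp]) (by linarith)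

lemma eq_of_fst_eq_of_affineForm_lt_two_mul {a b : E × ℝ} (hb : b ∈ simpleAffineRoots Φ x)
    (ha : a ∈ positiveAffineRoots Φ x) (hab : a.1 = b.1)
    (h : affineForm a x < 2 * affineForm b x) : a = b := by
  obtain ⟨⟨-, k, hk⟩, hA⟩ := ha
  obtain ⟨⟨⟨-, l, hl⟩, hB⟩, hB1, -⟩ := hb
  have hdiff : affineForm a x - affineForm b x = ((l - k : ℤ) : ℝ) := by
    simp only [affineForm, hab, hk, hl]
    push_cast
    ring
  have hlt : |((l - k : ℤ) : ℝ)| < 1 := by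
    rw [← hdiff, abs_lt]
    constructor <;> linarith
  have hkl : l - k = 0 := Int.abs_lt_one_iff.1 (by exact_mod_cast hlt)
  exact Prod.ext hab (by rw [hk, hl, sub_eq_zero.1 hkl])

/-- Here `c = b - a` is an affine root, negative since `b` is simple, and `b` decomposes as
`(a - b) + (2b - a)` if the pairing `hn` is `2`, and through `d = a - 2b` if it is `3`. -/
lemma false_of_inner_coroot_eq_one (hΦ : IsRootSystem Φ) (hx : x ∈ regularSet Φ) {a b : E × ℝ}
    (hb : b ∈ simpleAffineRoots Φ x) (ha : a ∈ positiveAffineRoots Φ x)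
    (hn' : ⟪a.1, coroot b.1⟫ = 1) (hn : ⟪b.1, coroot a.1⟫ = 2 ∨ ⟪b.1, coroot a.1⟫ = 3)
    (h : affineForm (reflectAffineRoot b a) x < 0) : False := by
  set c := reflectAffineRoot a b
  have hc : c ∈ affineRoots Φ := reflectAffineRoot_mem_affineRoots hΦ hb.1.1 ha.1
  have hfc : ∀ y, affineForm c y = affineForm b y - affineForm a y := fun y => by
    rw [affineForm_reflectAffineRoot, hn', one_mul]
  have hc_neg : affineForm c x < 0 :=
    affineForm_lt_zero_of_eq_add hx hb ha hc (funext fun y => by simp [hfc])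
  set a' := -reflectAffineRoot b a
  have ha' : a' ∈ positiveAffineRoots Φ x :=
    neg_mem_positiveAffineRoots hΦ (reflectAffineRoot_mem_affineRoots hΦ ha.1 hb.1.1) h
  have hfa' : ∀ y, affineForm a' y = ⟪b.1, coroot a.1⟫ * affineForm b y - affineForm a y :=
    fun y => by rw [affineForm_neg, affineForm_reflectAffineRoot]; ring
  rcases hn with hn | hn
  · have := affineForm_lt_zero_of_eq_add hx hb ha' (neg_mem_affineRoots hΦ hc)
      (funext fun y => by simp only [Pi.add_apply, affineForm_neg, hfc, hfa', hn]; ring)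
    rw [affineForm_neg] at this
    linarith
  · set d := reflectAffineRoot a' b
    have hd : d ∈ affineRoots Φ := reflectAffineRoot_mem_affineRoots hΦ hb.1.1 ha'.1
    have hpair : ⟪a'.1, coroot b.1⟫ = 1 := by
      simp only [a', reflectAffineRoot, Prod.fst_neg, inner_neg_left, reflection_apply,
        inner_sub_left, real_inner_smul_left, hn', inner_coroot_self (hΦ.ne_zero _ hb.1.1.1)]
      norm_num
    have hfd : ∀ y, affineForm d y = affineForm b y - affineForm a' y := fun y => by
      rw [affineForm_reflectAffineRoot, hpair, one_mul]
    have hd_neg := affineForm_lt_zero_of_eq_add hx hb ha' hd (funext fun y => by simp [hfd])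
    have := affineForm_lt_zero_of_eq_add hx hb (neg_mem_positiveAffineRoots hΦ hc hc_neg)
      (neg_mem_affineRoots hΦ hd)
      (funext fun y => by simp only [Pi.add_apply, affineForm_neg, hfc, hfd, hfa', hn]; ring)
    rw [affineForm_neg] at this
    linarith

lemma eq_of_affineForm_reflectAffineRoot_lt_zero (hΦ : IsRootSystem Φ) (hx : x ∈ regularSet Φ)
    {a b : E × ℝ} (hb : b ∈ simpleAffineRoots Φ x) (ha : a ∈ positiveAffineRoots Φ x)
    (h : affineForm (reflectAffineRoot b a) x < 0) : a = b := by
  have hA := ha.2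
  have hB := hb.1.2
  have hα := ha.1.1
  have hβ := hb.1.1.1
  obtain ⟨n, hn⟩ := hΦ.exists_int_inner_coroot a.1 hα b.1 hβ
  have h' : affineForm a x - n * affineForm b x < 0 := by
    rwa [affineForm_reflectAffineRoot, hn] at h
  have hn1 : 1 ≤ n := by
    by_contra! hn0
    have : (n : ℝ) ≤ 0 := by exact_mod_cast (by omega : n ≤ 0)
    nlinarith
  have hn2 : n ≠ 1 := by
    rintro rfl
    have := affineForm_lt_zero_of_eq_add hx hb ha
      (neg_mem_affineRoots hΦ (reflectAffineRoot_mem_affineRoots hΦ ha.1 hb.1.1))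
      (funext fun y => by simp [affineForm_neg, affineForm_reflectAffineRoot, hn])
    rw [affineForm_neg] at this
    linarith
  by_cases hβα : b.1 = a.1
  · refine eq_of_fst_eq_of_affineForm_lt_two_mul hb ha hβα.symm ?_
    rw [← hn, hβα, inner_coroot_self (hΦ.ne_zero _ hα)] at h'
    linarith
  have hβα' : b.1 ≠ -a.1 := by
    rintro hβα'
    rw [hβα', inner_neg_left, inner_coroot_self (hΦ.ne_zero _ hα)] at hn
    have : (n : ℝ) ≥ 1 := by exact_mod_cast hn1
    linarith
  obtain ⟨hn', hn3⟩ :=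
    hΦ.inner_coroot_eq_one_of_two_le hα hβ hβα hβα' (by rw [hn]; exact_mod_cast (by omega : 2 ≤ n))
  rw [hn] at hn3
  have hn3' : n ≤ 3 := by exact_mod_cast hn3
  refine (false_of_inner_coroot_eq_one hΦ hx hb ha hn' ?_ h).elim
  rcases (by omega : n = 2 ∨ n = 3) with rfl | rfl <;> norm_num [hn]

lemma reflectAffineRoot_mem_positiveAffineRoots (hΦ : IsRootSystem Φ) (hx : x ∈ regularSet Φ)
    {a b : E × ℝ} (hb : b ∈ simpleAffineRoots Φ x) (ha : a ∈ positiveAffineRoots Φ x)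
    (hab : a ≠ b) : reflectAffineRoot b a ∈ positiveAffineRoots Φ x := by
  have hmem := reflectAffineRoot_mem_affineRoots hΦ ha.1 hb.1.1
  refine ⟨hmem, (affineForm_ne_zero hx hmem).symm.lt_of_le (not_lt.1 fun h => hab ?_)⟩
  exact eq_of_affineForm_reflectAffineRoot_lt_zero hΦ hx hb ha h

lemma affineReflection_mem_closure_simpleReflections (hΦ : IsRootSystem Φ)
    (hx : x ∈ regularSet Φ) {a : E × ℝ} (ha : a ∈ positiveAffineRoots Φ x) :
    affineReflection a ∈ Subgroup.closure (simpleReflections Φ x) := by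
  obtain ⟨ε, hε, -, hgap⟩ := exists_gap hx
  refine gap_induction (f := (affineForm · x))
    (P := fun a => affineReflection a ∈ Subgroup.closure (simpleReflections Φ x))
    hε (fun a ha => ha.2.le) (fun a ha ih => ?_) a ha
  by_cases hs : a ∈ simpleAffineRoots Φ x
  · exact Subgroup.subset_closure ⟨a, hs, rfl⟩
  obtain ⟨b, hb, hab⟩ := exists_simple_inner_coroot_pos hx ha (u := a.1)
    (by rw [inner_coroot_self (hΦ.ne_zero _ ha.1.1)]; exact two_pos)
  have hn : 1 ≤ ⟪b.1, coroot a.1⟫ := by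
    rw [inner_coroot_pos_iff, real_inner_comm, ← inner_coroot_pos_iff] at hab
    obtain ⟨n, hn⟩ := hΦ.exists_int_inner_coroot a.1 ha.1.1 b.1 hb.1.1.1
    rw [hn] at hab ⊢
    exact_mod_cast (Int.cast_pos.1 hab : 0 < n)
  have hc := reflectAffineRoot_mem_positiveAffineRoots hΦ hx hb ha fun h => hs (h ▸ hb)
  have hsa : affineReflection a =
      affineReflection b * affineReflection (reflectAffineRoot b a) * affineReflection b := by
    rw [affineReflection_reflectAffineRoot]
    simp only [← mul_assoc, affineReflection_mul_self, one_mul]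
    rw [mul_assoc, affineReflection_mul_self, mul_one]
  rw [hsa]
  refine mul_mem (mul_mem (Subgroup.subset_closure ⟨b, hb, rfl⟩) (ih _ hc ?_))
    (Subgroup.subset_closure ⟨b, hb, rfl⟩)
  show affineForm (reflectAffineRoot b a) x + ε ≤ affineForm a x
  rw [affineForm_reflectAffineRoot]
  nlinarith [hgap b hb.1, hb.1.2]

/-! ### Words in simple reflections -/

lemma exists_affineRoot_conj (hΦ : IsRootSystem Φ) {w : E ≃ᵃ[ℝ] E}
    (hw : w ∈ Subgroup.closure (reflections Φ)) :
    ∀ b ∈ affineRoots Φ, ∃ q ∈ affineRoots Φ, (∀ y, affineForm q y = affineForm b (w⁻¹ y)) ∧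
      affineReflection q = w * affineReflection b * w⁻¹ := by
  induction hw using Subgroup.closure_induction'' with
  | mem _ hs | inv_mem _ hs =>
    obtain ⟨c, hc, rfl⟩ := hs
    intro b hb
    refine ⟨reflectAffineRoot c b, reflectAffineRoot_mem_affineRoots hΦ hb hc, fun y => ?_, ?_⟩
    · simp [affineForm_affineReflection]
    · simp [affineReflection_reflectAffineRoot]
  | one => exact fun b hb => ⟨b, hb, fun y => rfl, by simp⟩
  | mul u v _ _ hu hv =>
    intro b hb
    obtain ⟨q, hq, hfq, hsq⟩ := hv b hb
    obtain ⟨r, hr, hfr, hsr⟩ := hu q hq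
    exact ⟨r, hr, fun y => by rw [hfr, hfq, mul_inv_rev]; rfl, by rw [hsr, hsq]; group⟩

lemma simpleReflections_subset_reflections : simpleReflections Φ x ⊆ reflections Φ :=
  Set.image_mono fun _ hb => hb.1.1

lemma exists_shorter_word (hΦ : IsRootSystem Φ) (hx : x ∈ regularSet Φ) {b : E × ℝ}
    (hb : b ∈ simpleAffineRoots Φ x) (l : List (E ≃ᵃ[ℝ] E))
    (hl : ∀ s ∈ l, s ∈ simpleReflections Φ x) (h : affineForm b (l.prod⁻¹ x) < 0) :
    ∃ l' : List (E ≃ᵃ[ℝ] E), (∀ s ∈ l', s ∈ simpleReflections Φ x) ∧ l'.length < l.length ∧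
      l'.prod = l.prod * affineReflection b := by
  induction l with
  | nil => exact absurd h (not_lt.2 (by simpa using hb.1.2.le))
  | cons s t ih =>
    obtain ⟨c, hc, rfl⟩ := hl s List.mem_cons_self
    have ht : ∀ s ∈ t, s ∈ simpleReflections Φ x := fun s hs => hl s (List.mem_cons_of_mem _ hs)
    obtain ⟨q, hq, hfq, hsq⟩ := exists_affineRoot_conj hΦ
      (Subgroup.list_prod_mem _ fun s hs =>
        Subgroup.subset_closure (simpleReflections_subset_reflections (ht s hs))) b hb.1.1
    rcases (affineForm_ne_zero hx hq).lt_or_gt with hneg | hpos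
    · obtain ⟨t', ht', hlen, hprod⟩ := ih ht (by rwa [← hfq])
      refine ⟨affineReflection c :: t', List.forall_mem_cons.2 ⟨⟨c, hc, rfl⟩, ht'⟩,
        by simpa using hlen, by simp [hprod, mul_assoc]⟩
    · obtain rfl : q = c := by
        refine eq_of_affineForm_reflectAffineRoot_lt_zero hΦ hx hc ⟨hq, hpos⟩ ?_
        rw [List.prod_cons, mul_inv_rev, affineReflection_inv] at h
        rwa [← affineForm_affineReflection, hfq]
      refine ⟨t, ht, by simp, ?_⟩
      simp [hsq, mul_assoc]

lemma exists_list_simpleReflections (hΦ : IsRootSystem Φ) (hx : x ∈ regularSet Φ)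
    {w : E ≃ᵃ[ℝ] E} (hw : w ∈ Subgroup.closure (reflections Φ)) :
    ∃ l : List (E ≃ᵃ[ℝ] E), (∀ s ∈ l, s ∈ simpleReflections Φ x) ∧ l.prod = w := by
  have hle : Subgroup.closure (reflections Φ) ≤ Subgroup.closure (simpleReflections Φ x) := by
    rw [Subgroup.closure_le]
    rintro _ ⟨a, ha, rfl⟩
    rcases (affineForm_ne_zero hx ha).lt_or_gt with hneg | hpos
    · rw [← affineReflection_neg]
      exact affineReflection_mem_closure_simpleReflections hΦ hx
        (neg_mem_positiveAffineRoots hΦ ha hneg)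
    · exact affineReflection_mem_closure_simpleReflections hΦ hx ⟨ha, hpos⟩
  have hfin : ∀ s ∈ simpleReflections Φ x, IsOfFinOrder s := by
    rintro _ ⟨b, -, rfl⟩
    exact isOfFinOrder_iff_pow_eq_one.2 ⟨2, two_pos, by rw [pow_two, affineReflection_mul_self]⟩
  have hw' := hle hw
  rw [← Subgroup.mem_toSubmonoid, Subgroup.closure_toSubmonoid_of_isOfFinOrder hfin] at hw'
  exact Submonoid.exists_list_of_mem_closure hw'

lemma list_prod_eq_one_of_apply_eq (hΦ : IsRootSystem Φ) (hx : x ∈ regularSet Φ)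
    (l : List (E ≃ᵃ[ℝ] E)) (hl : ∀ s ∈ l, s ∈ simpleReflections Φ x) (h : l.prod x = x) :
    l.prod = 1 := by
  induction hn : l.length using Nat.strong_induction_on generalizing l with
  | _ n ih =>
  rcases l.eq_nil_or_concat' with rfl | ⟨L, s, rfl⟩
  · rfl
  obtain ⟨b, hb, rfl⟩ := hl s (by simp)
  rw [List.prod_append, List.prod_singleton] at h ⊢
  have hneg : affineForm b (L.prod⁻¹ x) < 0 := by
    have hx' : L.prod⁻¹ x = affineReflection b x := ((AffineEquiv.eq_symm_apply L.prod).2 h).symm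
    rw [hx', affineForm_affineReflection_self (hΦ.ne_zero _ hb.1.1.1)]
    linarith [hb.1.2]
  obtain ⟨l', hl', hlen, hprod⟩ :=
    exists_shorter_word hΦ hx hb L (fun s hs => hl s (by simp [hs])) hneg
  rw [← hprod] at h ⊢
  exact ih _ (by simp at hn; omega) l' hl' h rfl

theorem eq_one_of_mem_closure_of_apply_eq (hΦ : IsRootSystem Φ) (hx : x ∈ regularSet Φ)
    {w : E ≃ᵃ[ℝ] E} (hw : w ∈ Subgroup.closure (reflections Φ)) (h : w x = x) : w = 1 := by
  obtain ⟨l, hl, rfl⟩ := exists_list_simpleReflections hΦ hx hw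
  exact list_prod_eq_one_of_apply_eq hΦ hx l hl h

end AffineWeyl

/-- Let `Φ` be a finite reduced crystallographic root system in a real inner product
space `E`, with coroots `α^∨ = 2α/⟨α,α⟩`, and let `Ŵ` be the affine Weyl group, the
group of affine transformations of `E` generated by the affine reflections
`s_{α,k}(x) = x - (⟨x, α^∨⟩ - k) • α` for `α ∈ Φ`, `k ∈ ℤ`.  Then `Ŵ` preserves the
regular set `E^reg = {x : ⟨x, α^∨⟩ ∉ ℤ for all α ∈ Φ}` and acts freely on it. -/
theorem affine_weyl_group_acts_freely_on_regular_set
    {E : Type*} [NormedAddCommGroup E] [InnerProductSpace ℝ E]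
    (Φ : Finset E)
    -- the roots are nonzero
    (hne : ∀ α ∈ Φ, α ≠ 0)
    -- the coroots
    (coroot : E → E) (hcoroot : ∀ α ∈ Φ, coroot α = (2 / ⟪α, α⟫) • α)
    -- `Φ` is closed under the reflections `s_α`
    (hclosed : ∀ α ∈ Φ, ∀ β ∈ Φ, β - ⟪β, coroot α⟫ • α ∈ Φ)
    -- crystallographic: all pairings `⟨β, α^∨⟩` are integers
    (hcrys : ∀ α ∈ Φ, ∀ β ∈ Φ, ∃ n : ℤ, ⟪β, coroot α⟫ = (n : ℝ))
    -- reduced: the only multiples of a root in `Φ` are `±α`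
    (hred : ∀ α ∈ Φ, ∀ c : ℝ, c • α ∈ Φ → c = 1 ∨ c = -1)
    -- the affine Weyl group, generated by the affine reflections `s_{α,k}`
    (What : Subgroup (E ≃ᵃ[ℝ] E))
    (hWhat : What = Subgroup.closure
      {w : E ≃ᵃ[ℝ] E | ∃ α ∈ Φ, ∃ k : ℤ, ∀ x : E, w x = x - (⟪x, coroot α⟫ - (k : ℝ)) • α})
    -- the regular set
    (Ereg : Set E)
    (hEreg : Ereg = {x : E | ∀ α ∈ Φ, ∀ k : ℤ, ⟪x, coroot α⟫ ≠ (k : ℝ)}) :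
    (∀ w ∈ What, ∀ x ∈ Ereg, w x ∈ Ereg) ∧
    (∀ w ∈ What, ∀ x ∈ Ereg, w x = x → w = 1) := by
  have hco : ∀ α ∈ Φ, coroot α = AffineWeyl.coroot α := hcoroot
  have hΦ : AffineWeyl.IsRootSystem Φ :=
    ⟨hne, fun α hα β hβ => by simpa [AffineWeyl.reflection_apply, hco α hα] using hclosed α hα β hβ,
      fun α hα β hβ => by simpa [hco α hα] using hcrys α hα β hβ, hred⟩
  have hgen : {w : E ≃ᵃ[ℝ] E | ∃ α ∈ Φ, ∃ k : ℤ, ∀ x : E,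
      w x = x - (⟪x, coroot α⟫ - (k : ℝ)) • α} = AffineWeyl.reflections Φ := by
    ext w
    constructor
    · rintro ⟨α, hα, k, hw⟩
      refine ⟨(α, k), ⟨hα, k, rfl⟩, AffineEquiv.ext fun y => ?_⟩
      rw [AffineWeyl.affineReflection_apply, hw, AffineWeyl.affineForm, hco α hα]
    · rintro ⟨a, ⟨hα, k, hk⟩, rfl⟩
      refine ⟨a.1, hα, k, fun y => ?_⟩
      rw [AffineWeyl.affineReflection_apply, AffineWeyl.affineForm, hk, hco _ hα]
  have hreg : Ereg = AffineWeyl.regularSet Φ := by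
    subst hEreg
    ext y
    exact forall₂_congr fun α hα => by rw [hco α hα]
  subst hWhat hreg
  rw [hgen]
  exact ⟨fun w hw x hx => AffineWeyl.mapsTo_regularSet_of_mem_closure hΦ hw hx,
    fun w hw x hx => AffineWeyl.eq_one_of_mem_closure_of_apply_eq hΦ hx hw⟩
end
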